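/- Exact Shtarkov complexity of the 1-dimensional ℓ₁-penalized Gaussian location model: with f_X(θ) = (1/2)(X-θ)² + (1/2)ln(2π) and γ(θ) = λ|θ| (λ > 0), the Shtarkov integral satisfies ∫_ℝ e^{-inf_θ(f_X(θ)+γ(θ))} dX = 2Φ(λ) − 1 + √(2/π)·e^{-λ²/2}/λ, where Φ is the standard normal CDF. -/

import Mathlib

open MeasureTheory Real

/-- Standard normal CDF. -/
noncomputable def stdNormalCdf (l : ℝ) : ℝ :=
  ∫ y in Set.Iic l, Real.exp (-y ^ 2 / 2) / Real.sqrt (2 * Real.pi)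

/-!
Minimising `(X - θ)² / 2 + lam |θ|` over `θ` (the minimiser is the soft-thresholded `X`) gives
the Huber function of `X`: quadratic for `|X| ≤ lam` and linear beyond. Its negative exponential is
even, so its integral is twice the integral over `(0, ∞)`, which splits at `lam` into a piece of
the Gaussian integral, expressed through `Φ(lam) - 1/2`, and an exponential tail
`e^{-lam²/2} / lam`. The constant `log (2π) / 2` contributes the normalising factor `1 / √(2π)`.
-/

open Set

noncomputable def huber (lam x : ℝ) : ℝ :=
  if |x| ≤ lam then x ^ 2 / 2 else lam * |x| - lam ^ 2 / 2

lemma huber_abs (lam x : ℝ) : huber lam |x| = huber lam x := by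
  simp only [huber, abs_abs, sq_abs]

lemma continuous_huber (lam : ℝ) : Continuous (huber lam) :=
  Continuous.if_le (by fun_prop) (by fun_prop) continuous_abs continuous_const fun x hx => by
    rw [← sq_abs, hx]; ring

lemma huber_le_sq_add_abs {lam : ℝ} (hlam : 0 ≤ lam) (x θ : ℝ) :
    huber lam x ≤ (x - θ) ^ 2 / 2 + lam * |θ| := by
  unfold huber
  split_ifs with h
  · have hxθ : x * θ ≤ |x| * |θ| := (le_abs_self _).trans (abs_mul x θ).le
    nlinarith [mul_le_mul_of_nonneg_right h (abs_nonneg θ), sq_nonneg θ]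
  · have hsub : |x| - |θ| ≤ |x - θ| := abs_sub_abs_le_abs_sub x θ
    have hsq : (x - θ) ^ 2 = |x - θ| ^ 2 := (sq_abs _).symm
    nlinarith [sq_nonneg (|x - θ| - lam)]

lemma exists_sq_add_abs_eq_huber (lam x : ℝ) :
    ∃ θ, (x - θ) ^ 2 / 2 + lam * |θ| = huber lam x := by
  unfold huber
  split_ifs with h
  · exact ⟨0, by simp⟩
  · rcases le_or_gt 0 x with hx | hx
    · rw [abs_of_nonneg hx] at h ⊢
      exact ⟨x - lam, by rw [abs_of_pos (by linarith)]; ring⟩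
    · rw [abs_of_neg hx] at h ⊢
      exact ⟨x + lam, by rw [abs_of_neg (by linarith)]; ring⟩

lemma iInf_sq_add_const_add_abs_eq_huber {lam : ℝ} (hlam : 0 ≤ lam) (x c : ℝ) :
    ⨅ θ, ((x - θ) ^ 2 / 2 + c + lam * |θ|) = huber lam x + c := by
  refine IsLeast.csInf_eq ⟨?_, ?_⟩
  · obtain ⟨θ, hθ⟩ := exists_sq_add_abs_eq_huber lam x
    exact ⟨θ, by linarith⟩
  · rintro _ ⟨θ, rfl⟩
    linarith [huber_le_sq_add_abs hlam x θ]

lemma integrable_exp_neg_sq_div_two : Integrable fun x : ℝ => exp (-x ^ 2 / 2) := by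
  simpa [neg_div, div_eq_inv_mul] using integrable_exp_neg_mul_sq (b := 1 / 2) (by norm_num)

lemma integral_Iic_zero_exp_neg_sq_div_two :
    ∫ x in Iic 0, exp (-x ^ 2 / 2) = √(2 * π) / 2 := by
  have h := integral_gaussian_Ioi (1 / 2)
  rw [← neg_zero, ← integral_comp_neg_Ioi]
  convert h using 3
  · ring_nf
  · field_simp

lemma stdNormalCdf_eq_half_add (a : ℝ) :
    stdNormalCdf a = 1 / 2 + (∫ x in 0..a, exp (-x ^ 2 / 2)) / √(2 * π) := by
  rw [stdNormalCdf, integral_div, ← intervalIntegral.integral_Iic_sub_Iic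
    integrable_exp_neg_sq_div_two.integrableOn integrable_exp_neg_sq_div_two.integrableOn,
    integral_Iic_zero_exp_neg_sq_div_two]
  field_simp
  ring

lemma exp_neg_huber_of_lt {lam x : ℝ} (hlam : 0 ≤ lam) (hx : lam < x) :
    exp (-huber lam x) = exp (lam ^ 2 / 2) * exp (-lam * x) := by
  rw [huber, if_neg (by rw [abs_of_pos (hlam.trans_lt hx)]; exact hx.not_ge),
    abs_of_pos (hlam.trans_lt hx), ← exp_add]
  ring_nf

lemma integrableOn_Ioi_exp_neg_huber {lam : ℝ} (hlam : 0 < lam) :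
    IntegrableOn (fun x => exp (-huber lam x)) (Ioi lam) :=
  IntegrableOn.congr_fun ((exp_neg_integrableOn_Ioi lam hlam).const_mul _)
    (fun _ hx => (exp_neg_huber_of_lt hlam.le hx).symm) measurableSet_Ioi

lemma integral_Ioi_exp_neg_huber {lam : ℝ} (hlam : 0 < lam) :
    ∫ x in Ioi lam, exp (-huber lam x) = exp (-lam ^ 2 / 2) / lam := by
  rw [setIntegral_congr_fun measurableSet_Ioi fun _ hx => exp_neg_huber_of_lt hlam.le hx,
    integral_const_mul, integral_exp_mul_Ioi (by linarith), neg_div_neg_eq, mul_div_assoc',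
    ← exp_add]
  ring_nf

lemma integral_exp_neg_huber {lam : ℝ} (hlam : 0 < lam) :
    ∫ x, exp (-huber lam x) =
      2 * ((∫ x in 0..lam, exp (-x ^ 2 / 2)) + exp (-lam ^ 2 / 2) / lam) := by
  have hcont : Continuous fun x => exp (-huber lam x) := by
    have := continuous_huber lam; fun_prop
  have hmiddle : ∫ x in 0..lam, exp (-huber lam x) = ∫ x in 0..lam, exp (-x ^ 2 / 2) := by
    refine intervalIntegral.integral_congr fun x hx => ?_
    rw [uIcc_of_le hlam.le] at hx
    rw [huber, if_pos (by rw [abs_of_nonneg hx.1]; exact hx.2), neg_div]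
  rw [← integral_Ioi_exp_neg_huber hlam, ← hmiddle,
    intervalIntegral.integral_interval_add_Ioi' (hcont.intervalIntegrable 0 lam)
      (integrableOn_Ioi_exp_neg_huber hlam)]
  simpa only [huber_abs] using integral_comp_abs (f := fun x => exp (-huber lam x))

/-- Exact Shtarkov complexity of the one-dimensional
ℓ₁-penalized Gaussian location model: with `f_X(θ) = (1/2)(X-θ)² + (1/2)ln 2π`
and `γ(θ) = λ|θ|`, the Shtarkov integral equals
`2Φ(λ) - 1 + √(2/π) e^{-λ²/2}/λ`. -/
theorem shtarkov_gaussian_l1 (lam : ℝ) (hlam : 0 < lam) :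
    (∫ X : ℝ, Real.exp (-(⨅ θ : ℝ,
        ((X - θ) ^ 2 / 2 + Real.log (2 * Real.pi) / 2 + lam * |θ|))))
      = 2 * stdNormalCdf lam - 1
        + Real.sqrt (2 / Real.pi) * Real.exp (-lam ^ 2 / 2) / lam := by
  have hs : 0 < √(2 * π) := by positivity
  have hexp_log : exp (-(log (2 * π) / 2)) = (√(2 * π))⁻¹ := by
    rw [exp_neg, ← log_sqrt (by positivity), exp_log hs]
  have hsqrt : √(2 / π) = 2 / √(2 * π) := by
    rw [eq_div_iff hs.ne', ← sqrt_mul (by positivity),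
      show 2 / π * (2 * π) = 2 ^ 2 by field_simp, sqrt_sq zero_le_two]
  simp_rw [iInf_sq_add_const_add_abs_eq_huber hlam.le, neg_add, exp_add, hexp_log,
    integral_mul_const, integral_exp_neg_huber hlam, stdNormalCdf_eq_half_add, hsqrt]
  field_simp
  ring
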